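/- arXiv:2401.17830 — 2 statements merged into one kernel-verified Lean document; each statement's English description precedes it below -/
import Mathlib

section
/- Let δ = |δ|e^{iθ} ∈ ℝ² \ {0} with |δ| > 0, and define f(φ₁, φ₂) = −(1/2)log 2 − (1/2)log(1 − cos(φ₁ − φ₂)) − δ₁(sin φ₁ + sin φ₂) + δ₂(cos φ₁ + cos φ₂) on {(φ₁,φ₂) ∈ ℝ² : φ₁ − φ₂ ∉ 2πℤ}, where δ = (δ₁,δ₂). Then the minimum of f is attained exactly (up to exchanging φ₁ and φ₂ and adding multiples of 2π) at φ₁ = θ + θ_δ and φ₂ = θ + π − θ_δ, where θ_δ = arcsin(√(1 + 1/(16|δ|²)) − 1/(4|δ|)). -/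
open Real

/-!
In the half-angle coordinates `d = (φ₁ - φ₂) / 2`, `s = (φ₁ + φ₂) / 2 - θ` the energy reads
`-log 2 - (1/2) log (1 - cos² d) - 2 r sin s cos d`. For fixed `d` it is smallest when
`sin s cos d = |cos d|`, which leaves the one-variable function
`g(y) = -(1/2) log (1 - y²) - 2 r y` (`reducedEnergy`) of `y = |cos d| ∈ [0, 1)`. Its critical
point `c = sin θ_δ` (`criticalSine`) is the positive root of `2 r (1 - c²) = c`, and the
tangent-line bound `log u ≤ u - 1` at `u = (1 - y²) / (1 - c²)` gives
`g(y) ≥ g(c) + (r / c) (y - c)²`, so `c` is the strict minimum. Equality forces `|cos d| = c`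
and `sin s cos d = c`, which pins down `(φ₁, φ₂)` modulo `2π` and exchange.
-/

noncomputable def vortexPairEnergy (r θ φ₁ φ₂ : ℝ) : ℝ :=
  -(1 / 2) * log 2 - (1 / 2) * log (1 - cos (φ₁ - φ₂))
    - (r * cos θ) * (sin φ₁ + sin φ₂) + (r * sin θ) * (cos φ₁ + cos φ₂)

noncomputable def reducedEnergy (r y : ℝ) : ℝ := -(1 / 2) * log (1 - y ^ 2) - 2 * r * y

noncomputable def criticalSine (r : ℝ) : ℝ := √(1 + 1 / (16 * r ^ 2)) - 1 / (4 * r)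

lemma criticalSine_pos {r : ℝ} (hr : 0 < r) : 0 < criticalSine r := by
  have : 1 / (4 * r) < √(1 + 1 / (16 * r ^ 2)) := by
    rw [lt_sqrt (by positivity)]
    have : (1 / (4 * r)) ^ 2 = 1 / (16 * r ^ 2) := by ring
    linarith
  unfold criticalSine
  linarith

lemma two_mul_one_sub_criticalSine_sq {r : ℝ} (hr : 0 < r) :
    2 * r * (1 - criticalSine r ^ 2) = criticalSine r := by
  have hS : √(1 + 1 / (16 * r ^ 2)) ^ 2 = 1 + 1 / (16 * r ^ 2) := sq_sqrt (by positivity)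
  unfold criticalSine
  generalize √(1 + 1 / (16 * r ^ 2)) = S at hS ⊢
  field_simp
  field_simp at hS
  linear_combination (-2) * hS

lemma criticalSine_lt_one {r : ℝ} (hr : 0 < r) : criticalSine r < 1 := by
  have hc := criticalSine_pos hr
  have hcrit := two_mul_one_sub_criticalSine_sq hr
  have : criticalSine r ^ 2 < 1 := by nlinarith
  nlinarith

lemma reducedEnergy_add_sq_le {r c y : ℝ} (hr : 0 < r) (hc : 0 < c)
    (hcrit : 2 * r * (1 - c ^ 2) = c) (hy : y ^ 2 < 1) :
    reducedEnergy r c + r / c * (y - c) ^ 2 ≤ reducedEnergy r y := by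
  have hc' : 1 - c ^ 2 = c / (2 * r) := by field_simp; linarith
  have hc_pos : 0 < 1 - c ^ 2 := by rw [hc']; positivity
  have hy_pos : 0 < 1 - y ^ 2 := by linarith
  have hlog : log (1 - y ^ 2) = log ((1 - y ^ 2) / (1 - c ^ 2)) + log (1 - c ^ 2) := by
    rw [log_div hy_pos.ne' hc_pos.ne']
    ring
  have htangent := log_le_sub_one_of_pos (div_pos hy_pos hc_pos)
  have hquadratic : -(1 / 2) * ((1 - y ^ 2) / (1 - c ^ 2) - 1) - 2 * r * (y - c)
      = r / c * (y - c) ^ 2 := by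
    rw [hc']
    field_simp
    linear_combination (-1) * hcrit
  unfold reducedEnergy
  linarith

lemma vortexPairEnergy_comm (r θ φ₁ φ₂ : ℝ) :
    vortexPairEnergy r θ φ₁ φ₂ = vortexPairEnergy r θ φ₂ φ₁ := by
  unfold vortexPairEnergy
  rw [← cos_neg, neg_sub]
  ring

lemma vortexPairEnergy_add_two_pi_mul (r θ φ₁ φ₂ : ℝ) (k l : ℤ) :
    vortexPairEnergy r θ (φ₁ + 2 * π * k) (φ₂ + 2 * π * l) = vortexPairEnergy r θ φ₁ φ₂ := by
  have hsub : φ₁ + 2 * π * k - (φ₂ + 2 * π * l) = φ₁ - φ₂ + ((k - l : ℤ) : ℝ) * (2 * π) := by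
    push_cast
    ring
  rw [vortexPairEnergy, vortexPairEnergy, hsub, cos_add_int_mul_two_pi]
  simp only [mul_comm (2 * π), sin_add_int_mul_two_pi, cos_add_int_mul_two_pi]

lemma vortexPairEnergy_half_angle (r θ s d : ℝ) (hd : sin d ≠ 0) :
    vortexPairEnergy r θ (θ + s + d) (θ + s - d)
      = -log 2 + reducedEnergy r |cos d| + 2 * r * (|cos d| - sin s * cos d) := by
  have hsin : 0 < 1 - cos d ^ 2 := by
    rw [← sin_sq]
    exact pow_two_pos_of_ne_zero hd
  have hcos : 1 - cos (θ + s + d - (θ + s - d)) = 2 * (1 - cos d ^ 2) := by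
    rw [show θ + s + d - (θ + s - d) = 2 * d by ring, cos_two_mul]
    ring
  rw [vortexPairEnergy, reducedEnergy, hcos, log_mul two_ne_zero hsin.ne', sq_abs]
  simp only [sin_add, cos_add, sin_sub, cos_sub]
  linear_combination (-2 * r * cos d * sin s) * sin_sq_add_cos_sq θ

lemma vortexPairEnergy_eq_reducedEnergy_sin (r θ β : ℝ) (hβ : 0 < sin β) (hβ' : cos β ≠ 0) :
    vortexPairEnergy r θ (θ + β) (θ + π - β) = -log 2 + reducedEnergy r (sin β) := by
  have h := vortexPairEnergy_half_angle r θ (π / 2) (β - π / 2)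
    (by rwa [sin_sub_pi_div_two, neg_ne_zero])
  rw [show θ + π / 2 + (β - π / 2) = θ + β by ring,
    show θ + π / 2 - (β - π / 2) = θ + π - β by ring,
    cos_sub_pi_div_two, sin_pi_div_two, one_mul, abs_of_pos hβ] at h
  rw [h]
  ring

lemma exists_int_of_sin_eq_one_of_cos_eq_sin {s d β : ℝ} (hs : sin s = 1)
    (hd : cos d = sin β) :
    ∃ k l : ℤ, (s + d = β + 2 * π * k ∧ s - d = π - β + 2 * π * l) ∨
      (s + d = π - β + 2 * π * k ∧ s - d = β + 2 * π * l) := by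
  obtain ⟨m, hm⟩ := sin_eq_one_iff.mp hs
  rw [← cos_pi_div_two_sub] at hd
  obtain ⟨k, hk | hk⟩ := cos_eq_cos_iff.mp hd
  · exact ⟨m - k, m + k, Or.inr ⟨by push_cast; linarith, by push_cast; linarith⟩⟩
  · exact ⟨m + k, m - k, Or.inl ⟨by push_cast; linarith, by push_cast; linarith⟩⟩

lemma exists_int_of_sin_mul_cos_eq_abs {s d β : ℝ} (hβ : 0 < sin β)
    (habs : |cos d| = sin β) (hmul : sin s * cos d = sin β) :
    ∃ k l : ℤ, (s + d = β + 2 * π * k ∧ s - d = π - β + 2 * π * l) ∨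
      (s + d = π - β + 2 * π * k ∧ s - d = β + 2 * π * l) := by
  rcases (abs_eq hβ.le).mp habs with hd | hd
  · rw [hd, mul_eq_right₀ hβ.ne'] at hmul
    exact exists_int_of_sin_eq_one_of_cos_eq_sin hmul hd
  · -- shifting `φ₂` by `2π` turns `(s, d)` into `(s + π, d - π)`, reducing to the first case
    have hs : sin (s + π) = 1 := by
      rw [hd] at hmul
      rw [sin_add_pi]
      nlinarith
    have hd' : cos (d - π) = sin β := by rw [cos_sub_pi, hd, neg_neg]
    obtain ⟨k, l, ⟨h₁, h₂⟩ | ⟨h₁, h₂⟩⟩ := exists_int_of_sin_eq_one_of_cos_eq_sin hs hd'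
    · exact ⟨k, l - 1, Or.inl ⟨by linarith, by push_cast; linarith⟩⟩
    · exact ⟨k, l - 1, Or.inr ⟨by linarith, by push_cast; linarith⟩⟩

lemma vortexPairEnergy_half_angle_ge {r θ β s d : ℝ} (hr : 0 < r) (hβ : 0 < sin β)
    (hcrit : 2 * r * cos β ^ 2 = sin β) (hd : sin d ≠ 0) :
    vortexPairEnergy r θ (θ + β) (θ + π - β) + r / sin β * (|cos d| - sin β) ^ 2
      + 2 * r * (|cos d| - sin s * cos d) ≤ vortexPairEnergy r θ (θ + s + d) (θ + s - d) := by
  have hcos : cos β ≠ 0 := by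
    rintro h
    rw [h] at hcrit
    linarith
  have hcrit' : 2 * r * (1 - sin β ^ 2) = sin β := by rwa [← cos_sq']
  have hy : |cos d| ^ 2 < 1 := by
    rw [sq_abs, ← sin_sq_add_cos_sq d]
    linarith [pow_two_pos_of_ne_zero hd]
  rw [vortexPairEnergy_half_angle r θ s d hd, vortexPairEnergy_eq_reducedEnergy_sin r θ β hβ hcos]
  linarith [reducedEnergy_add_sq_le hr hβ hcrit' hy]

lemma vortexPairEnergy_minimizer_le_and_unique {r θ β φ₁ φ₂ : ℝ} (hr : 0 < r) (hβ : 0 < sin β)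
    (hcrit : 2 * r * cos β ^ 2 = sin β) (hne : ¬∃ k : ℤ, φ₁ - φ₂ = 2 * π * k) :
    vortexPairEnergy r θ (θ + β) (θ + π - β) ≤ vortexPairEnergy r θ φ₁ φ₂ ∧
      (vortexPairEnergy r θ φ₁ φ₂ ≤ vortexPairEnergy r θ (θ + β) (θ + π - β) →
        ∃ k l : ℤ, (φ₁ = θ + β + 2 * π * k ∧ φ₂ = θ + π - β + 2 * π * l) ∨
          (φ₁ = θ + π - β + 2 * π * k ∧ φ₂ = θ + β + 2 * π * l)) := by
  obtain ⟨s, d, rfl, rfl⟩ : ∃ s d, φ₁ = θ + s + d ∧ φ₂ = θ + s - d :=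
    ⟨(φ₁ + φ₂) / 2 - θ, (φ₁ - φ₂) / 2, by ring, by ring⟩
  have hd : sin d ≠ 0 := by
    intro h
    obtain ⟨n, hn⟩ := sin_eq_zero_iff.mp h
    exact hne ⟨n, by linarith⟩
  have hbound := vortexPairEnergy_half_angle_ge (θ := θ) (s := s) hr hβ hcrit hd
  have hsq : 0 ≤ r / sin β * (|cos d| - sin β) ^ 2 := by positivity
  have hcenter : sin s * cos d ≤ |cos d| := by
    refine (le_abs_self _).trans ?_
    rw [abs_mul]
    exact mul_le_of_le_one_left (abs_nonneg _) (abs_sin_le_one s)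
  refine ⟨by nlinarith, fun hle => ?_⟩
  have habs : |cos d| = sin β := by
    have h : r / sin β * (|cos d| - sin β) ^ 2 = 0 := by nlinarith
    rwa [mul_eq_zero, or_iff_right (by positivity), sq_eq_zero_iff, sub_eq_zero] at h
  have hmul : sin s * cos d = sin β := by
    rw [← habs]
    nlinarith
  obtain ⟨k, l, ⟨h₁, h₂⟩ | ⟨h₁, h₂⟩⟩ := exists_int_of_sin_mul_cos_eq_abs hβ habs hmul
  · exact ⟨k, l, Or.inl ⟨by linarith, by linarith⟩⟩
  · exact ⟨k, l, Or.inr ⟨by linarith, by linarith⟩⟩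

/-- minimisation of the renormalised energy (in angular variables)
for two boundary vortices on the unit circle, with DMI vector
`δ = |δ|e^{iθ} = (r cos θ, r sin θ)`, `r = |δ| > 0`. The minimum of `f` is
attained exactly, up to exchanging `φ₁` and `φ₂` and adding multiples of `2π`,
at `φ₁ = θ + θ_δ`, `φ₂ = θ + π − θ_δ`. -/
theorem stmt_5 (r θ : ℝ) (hr : 0 < r)
    (f : ℝ → ℝ → ℝ)
    (hf : ∀ φ₁ φ₂ : ℝ, f φ₁ φ₂ =
      -(1 / 2) * Real.log 2 - (1 / 2) * Real.log (1 - Real.cos (φ₁ - φ₂))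
        - (r * Real.cos θ) * (Real.sin φ₁ + Real.sin φ₂)
        + (r * Real.sin θ) * (Real.cos φ₁ + Real.cos φ₂))
    (θδ : ℝ)
    (hθδ : θδ = Real.arcsin (Real.sqrt (1 + 1 / (16 * r ^ 2)) - 1 / (4 * r))) :
    (∀ φ₁ φ₂ : ℝ, (¬ ∃ k : ℤ, φ₁ - φ₂ = 2 * Real.pi * k) →
      f (θ + θδ) (θ + Real.pi - θδ) ≤ f φ₁ φ₂) ∧
    (∀ φ₁ φ₂ : ℝ, (¬ ∃ k : ℤ, φ₁ - φ₂ = 2 * Real.pi * k) →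
      (f φ₁ φ₂ = f (θ + θδ) (θ + Real.pi - θδ) ↔
        (∃ k l : ℤ,
          (φ₁ = θ + θδ + 2 * Real.pi * k ∧ φ₂ = θ + Real.pi - θδ + 2 * Real.pi * l) ∨
          (φ₁ = θ + Real.pi - θδ + 2 * Real.pi * k ∧ φ₂ = θ + θδ + 2 * Real.pi * l)))) := by
  obtain rfl : f = vortexPairEnergy r θ := funext₂ hf
  have hsin : sin θδ = criticalSine r := by
    rw [hθδ]
    exact sin_arcsin (x := criticalSine r) (by linarith [criticalSine_pos hr])
      (criticalSine_lt_one hr).le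
  have hβ : 0 < sin θδ := hsin ▸ criticalSine_pos hr
  have hcrit : 2 * r * cos θδ ^ 2 = sin θδ := by
    rw [cos_sq', hsin, two_mul_one_sub_criticalSine_sq hr]
  have hmin := fun φ₁ φ₂ (hne : ¬∃ k : ℤ, φ₁ - φ₂ = 2 * π * k) ↦
    vortexPairEnergy_minimizer_le_and_unique (θ := θ) hr hβ hcrit hne
  refine ⟨fun φ₁ φ₂ hne ↦ (hmin φ₁ φ₂ hne).1, fun φ₁ φ₂ hne ↦ ⟨fun h ↦ (hmin φ₁ φ₂ hne).2 h.le, ?_⟩⟩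
  rintro ⟨k, l, ⟨rfl, rfl⟩ | ⟨rfl, rfl⟩⟩
  · exact vortexPairEnergy_add_two_pi_mul r θ _ _ k l
  · rw [vortexPairEnergy_add_two_pi_mul, vortexPairEnergy_comm]
end

section
/- Let δ = |δ|e^{iθ} ∈ ℝ² with |δ| > 0 and consider distinct points a₁, a₂ on the unit circle with a₂ = −a₁ (diametrically opposed). If (a₁, a₂) is a critical point of W(a₁,a₂) = −2π log|a₁ − a₂| + 2πδ·(a₁^⊥ + a₂^⊥) on {(a₁,a₂) ∈ ∂B₁ × ∂B₁ : a₁ ≠ a₂}, then a₁ = ±δ^⊥/|δ|, and this critical point is not a local minimum (the Hessian of the associated angular function f has negative determinant −|δ|² < 0 there). -/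
/-!
At a diametral pair `φ₂ = φ₁ + π` the logarithmic term has zero `φ₁`-derivative, so criticality
reduces to `δ · a₁ = 0`, i.e. `cos (φ₁ - θ) = 0` and `a₁ = ±δ^⊥/|δ|`. Perturbing the pair by a
common rotation `s` and a spread `d`, the energy becomes
`-log 2 - log (cos d) + 2 r sin (φ₁ - θ) sin d sin s`: the spread costs only `d²`, while a
rotation of the right sign coupled to it gains order `r |d s|`. Taking `s = ∓u`, `d = m u` with
`m ≤ r / 4` therefore lowers the energy, so the critical point is not a local minimum.
-/

open Real Filter Topology Set

/-- The paper's angular function `f`, with `δ = (r cos θ, r sin θ)`. -/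
noncomputable def angularEnergy (r θ : ℝ) (p : ℝ × ℝ) : ℝ :=
  -(1 / 2) * log 2 - (1 / 2) * log (1 - cos (p.1 - p.2))
    - (r * cos θ) * (sin p.1 + sin p.2) + (r * sin θ) * (cos p.1 + cos p.2)

theorem not_isLocalMin_of_tendsto_of_lt {ι X β : Type*} [TopologicalSpace X] [Preorder β]
    {f : X → β} {γ : ι → X} {l : Filter ι} [l.NeBot] {x : X}
    (hγ : Tendsto γ l (𝓝 x)) (hlt : ∀ᶠ u in l, f (γ u) < f x) : ¬IsLocalMin f x := fun hmin =>
  let ⟨_, hle, hlt⟩ := ((hγ.eventually hmin).and hlt).exists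
  hlt.not_ge hle

namespace Real

theorem neg_sq_le_log_cos {x : ℝ} (hx : x ^ 2 ≤ 1) : -x ^ 2 ≤ log (cos x) := by
  have hcos : 1 - x ^ 2 / 2 ≤ cos x := one_sub_sq_div_two_le_cos
  have hpos : 0 < cos x := by linarith
  have hinv : (cos x)⁻¹ ≤ 1 + x ^ 2 := (inv_le_iff_one_le_mul₀ hpos).2 (by nlinarith)
  calc -x ^ 2 ≤ 1 - (cos x)⁻¹ := by linarith
    _ ≤ log (cos x) := one_sub_inv_le_log_of_pos hpos

theorem half_le_sin {x : ℝ} (hx₀ : 0 ≤ x) (hx₁ : x ≤ 1) : x / 2 ≤ sin x := by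
  have hπ : 2 / 4 * x ≤ 2 / π * x := by gcongr; exact pi_le_four
  linarith [mul_le_sin hx₀ (by linarith [pi_gt_three])]

theorem cos_sin_eq_neg_of_cos_sub_eq_neg_one {x y : ℝ} (h : cos (x - y) = -1) :
    cos y = -cos x ∧ sin y = -sin x := by
  have hsin : sin (x - y) = 0 := sin_eq_zero_iff_cos_eq.2 (Or.inr h)
  constructor
  · simpa [h, hsin] using cos_sub x (x - y)
  · simpa [h, hsin] using sin_sub x (x - y)

theorem cos_sin_eq_of_cos_sub_eq_zero {x y : ℝ} (h : cos (x - y) = 0) :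
    cos x = -sin y * sin (x - y) ∧ sin x = cos y * sin (x - y) := by
  constructor
  · simpa [h, mul_comm] using cos_add (x - y) y
  · simpa [h, mul_comm] using sin_add (x - y) y

end Real

theorem hasDerivAt_angularEnergy_fst (r θ x y : ℝ) (h : cos (x - y) ≠ 1) :
    HasDerivAt (fun t => angularEnergy r θ (t, y))
      (-(sin (x - y) / (2 * (1 - cos (x - y)))) - r * cos (x - θ)) x := by
  have hne : 1 - cos (x - y) ≠ 0 := sub_ne_zero.2 (Ne.symm h)
  have hlog := (((hasDerivAt_id x).sub_const y).cos.const_sub 1).log hne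
  have := (((hlog.const_mul (1 / 2)).const_sub (-(1 / 2) * log 2)).sub
    (((hasDerivAt_sin x).add_const (sin y)).const_mul (r * cos θ))).add
    (((hasDerivAt_cos x).add_const (cos y)).const_mul (r * sin θ))
  refine this.congr_deriv ?_
  simp only [id, cos_sub x θ]
  field_simp
  ring

theorem differentiableAt_angularEnergy (r θ : ℝ) {p : ℝ × ℝ} (h : cos (p.1 - p.2) ≠ 1) :
    DifferentiableAt ℝ (angularEnergy r θ) p := by
  have hne : 1 - cos (p.1 - p.2) ≠ 0 := sub_ne_zero.2 (Ne.symm h)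
  unfold angularEnergy
  fun_prop (disch := exact hne)

theorem cos_sub_eq_zero_of_fderiv_angularEnergy_eq_zero {r θ φ₁ φ₂ : ℝ} (hr : r ≠ 0)
    (hdiam : cos (φ₁ - φ₂) = -1) (hcrit : fderiv ℝ (angularEnergy r θ) (φ₁, φ₂) = 0) :
    cos (φ₁ - θ) = 0 := by
  have hne : cos (φ₁ - φ₂) ≠ 1 := by rw [hdiam]; norm_num
  have hpartial : HasDerivAt (fun t => angularEnergy r θ (t, φ₂)) 0 φ₁ := by
    have h := (differentiableAt_angularEnergy r θ hne).hasFDerivAt.comp_hasDerivAt φ₁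
      ((hasDerivAt_id' φ₁).prodMk (hasDerivAt_const φ₁ φ₂))
    rw [hcrit] at h
    exact h
  have hsin : sin (φ₁ - φ₂) = 0 := sin_eq_zero_iff_cos_eq.2 (Or.inr hdiam)
  simpa [hsin, hr] using (hasDerivAt_angularEnergy_fst r θ φ₁ φ₂ hne).unique hpartial

theorem angularEnergy_add_add_sub {r θ φ₁ φ₂ : ℝ} (hdiam : cos (φ₁ - φ₂) = -1)
    (horth : cos (φ₁ - θ) = 0) (s : ℝ) {d : ℝ} (hd : cos d ≠ 0) :
    angularEnergy r θ (φ₁ + s + d, φ₂ + s - d)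
      = -log 2 - log (cos d) + 2 * r * sin (φ₁ - θ) * sin d * sin s := by
  obtain ⟨hc₂, hs₂⟩ := cos_sin_eq_neg_of_cos_sub_eq_neg_one hdiam
  obtain ⟨hc₁, hs₁⟩ := cos_sin_eq_of_cos_sub_eq_zero horth
  have hgap : 1 - cos (φ₁ + s + d - (φ₂ + s - d)) = 2 * cos d ^ 2 := by
    rw [show φ₁ + s + d - (φ₂ + s - d) = (φ₁ - φ₂) + 2 * d by ring, cos_add, hdiam,
      sin_eq_zero_iff_cos_eq.2 (Or.inr hdiam), cos_two_mul]
    ring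
  have hlog : log (2 * cos d ^ 2) = log 2 + 2 * log (cos d) := by
    rw [log_mul two_ne_zero (pow_ne_zero 2 hd), log_pow]; push_cast; ring
  obtain ⟨σ, hσ⟩ : ∃ σ, sin (φ₁ - θ) = σ := ⟨_, rfl⟩
  rw [hσ] at hc₁ hs₁ ⊢
  unfold angularEnergy
  rw [hgap, hlog]
  simp only [sin_add, cos_add, sin_sub, cos_sub, hc₂, hs₂, hc₁, hs₁]
  linear_combination (2 * r * σ * sin d * sin s) * sin_sq_add_cos_sq θ

theorem angularEnergy_of_cos_sub_eq_neg_one {r θ φ₁ φ₂ : ℝ} (hdiam : cos (φ₁ - φ₂) = -1) :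
    angularEnergy r θ (φ₁, φ₂) = -log 2 := by
  obtain ⟨hc₂, hs₂⟩ := cos_sin_eq_neg_of_cos_sub_eq_neg_one hdiam
  unfold angularEnergy
  rw [hdiam, hc₂, hs₂]
  norm_num
  ring

theorem not_isLocalMin_angularEnergy {r θ φ₁ φ₂ : ℝ} (hr : 0 < r)
    (hdiam : cos (φ₁ - φ₂) = -1) (horth : cos (φ₁ - θ) = 0) :
    ¬IsLocalMin (angularEnergy r θ) (φ₁, φ₂) := by
  set σ := sin (φ₁ - θ)
  have hσsin (u : ℝ) : σ * sin (-σ * u) = -sin u := by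
    rcases cos_eq_zero_iff_sin_eq.1 horth with h | h <;> simp [σ, h]
  set m := min (r / 4) 1
  have hm₀ : 0 < m := lt_min (by positivity) one_pos
  -- Along `γ` the energy drops by `2 r sin (m u) sin u + log (cos (m u)) ≥ (r m / 2 - m ^ 2) u ^ 2`.
  let γ : ℝ → ℝ × ℝ := fun u => (φ₁ + -σ * u + m * u, φ₂ + -σ * u - m * u)
  have hγ : Tendsto γ (𝓝[>] 0) (𝓝 (φ₁, φ₂)) := by
    refine (Continuous.tendsto' ?_ 0 _ (by simp [γ])).mono_left nhdsWithin_le_nhds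
    fun_prop
  refine not_isLocalMin_of_tendsto_of_lt hγ ?_
  filter_upwards [Ioc_mem_nhdsGT one_pos] with u ⟨hu₀, hu₁⟩
  have hmu₀ : 0 < m * u := mul_pos hm₀ hu₀
  have hmu₁ : m * u ≤ 1 := by nlinarith [min_le_right (r / 4) 1]
  have hcos : 0 < cos (m * u) :=
    cos_pos_of_mem_Ioo ⟨by linarith [pi_gt_three], by linarith [pi_gt_three]⟩
  have hlog : -(m * u) ^ 2 ≤ log (cos (m * u)) := neg_sq_le_log_cos (by nlinarith)
  have hsin : m * u / 2 * (u / 2) ≤ sin (m * u) * sin u :=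
    mul_le_mul (half_le_sin hmu₀.le hmu₁) (half_le_sin hu₀.le hu₁) (by positivity)
      (sin_nonneg_of_nonneg_of_le_pi hmu₀.le (by linarith [pi_gt_three]))
  rw [angularEnergy_add_add_sub hdiam horth _ hcos.ne', angularEnergy_of_cos_sub_eq_neg_one hdiam]
  have hdrop : 2 * r * σ * sin (m * u) * sin (-σ * u) = -(2 * r * (sin (m * u) * sin u)) := by
    linear_combination 2 * r * sin (m * u) * hσsin u
  rw [hdrop]
  nlinarith [mul_le_mul_of_nonneg_left hsin hr.le, min_le_left (r / 4) 1, mul_pos hmu₀ hu₀]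

/-- a diametrically-opposed critical point of the renormalised
energy on the unit circle (in angular variables, with `δ = (r cos θ, r sin θ)`,
`r = |δ| > 0`) must satisfy `a₁ = ±δ^⊥/|δ|`; moreover the determinant of the
Hessian of the angular function `f` there equals `−|δ|² < 0`, so the critical
point is not a local minimum. -/
theorem stmt_7 (r θ : ℝ) (hr : 0 < r)
    (F : ℝ × ℝ → ℝ)
    (hF : ∀ p : ℝ × ℝ, F p =
      -(1 / 2) * Real.log 2 - (1 / 2) * Real.log (1 - Real.cos (p.1 - p.2))
        - (r * Real.cos θ) * (Real.sin p.1 + Real.sin p.2)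
        + (r * Real.sin θ) * (Real.cos p.1 + Real.cos p.2))
    (φ₁ φ₂ : ℝ)
    (hdiam : Real.cos (φ₁ - φ₂) = -1)
    (hcrit : fderiv ℝ F (φ₁, φ₂) = 0) :
    ((Real.cos φ₁, Real.sin φ₁) = (-Real.sin θ, Real.cos θ) ∨
      (Real.cos φ₁, Real.sin φ₁) = (Real.sin θ, -Real.cos θ)) ∧
    (((Real.cos φ₁ + Real.cos φ₂) * (-(r * Real.sin θ)) +
        (Real.sin φ₁ + Real.sin φ₂) * (r * Real.cos θ)) /
          (2 * (1 - Real.cos (φ₁ - φ₂))) +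
      (Real.cos φ₁ * (-(r * Real.sin θ)) + Real.sin φ₁ * (r * Real.cos θ)) *
        (Real.cos φ₂ * (-(r * Real.sin θ)) + Real.sin φ₂ * (r * Real.cos θ))
        = -r ^ 2) ∧
    ¬ IsLocalMin F (φ₁, φ₂) := by
  obtain rfl : F = angularEnergy r θ := funext hF
  have horth := cos_sub_eq_zero_of_fderiv_angularEnergy_eq_zero hr.ne' hdiam hcrit
  refine ⟨?_, ?_, not_isLocalMin_angularEnergy hr hdiam horth⟩
  · obtain ⟨hc₁, hs₁⟩ := cos_sin_eq_of_cos_sub_eq_zero horth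
    rcases cos_eq_zero_iff_sin_eq.1 horth with h | h
    · left; simp [hc₁, hs₁, h]
    · right; simp [hc₁, hs₁, h]
  · obtain ⟨hc₂, hs₂⟩ := cos_sin_eq_neg_of_cos_sub_eq_neg_one hdiam
    rw [hdiam, hc₂, hs₂]
    linear_combination (-r ^ 2) * sin_sq_add_cos_sq (φ₁ - θ) + r ^ 2 * cos (φ₁ - θ) * horth
      + r ^ 2 * (sin (φ₁ - θ) + sin φ₁ * cos θ - cos φ₁ * sin θ) * sin_sub φ₁ θ
end
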